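/- For every integer n ≥ 3 and every real x ∈ [-1,1], one has P_n(x)^2 + x^2 ≤ 1. -/

import Mathlib

open Finset Polynomial Real

noncomputable section

/-- Binomial coefficient `C(a, b)` for integer lower index, zero when `b < 0` or `b > a`. -/
def chooseZ (a : ℕ) (b : ℤ) : ℤ := if 0 ≤ b then (a.choose b.toNat : ℤ) else 0

/-- `f n k m p = ∑_{i=0}^{n} (-1)^i C(n,i) C(np+m-ip, n+k)`. -/
def f (n : ℕ) (k : ℤ) (m p : ℕ) : ℤ :=
  ∑ i ∈ Finset.range (n + 1),
    (-1) ^ i * (n.choose i : ℤ) * chooseZ (n * p + m - i * p) ((n : ℤ) + k)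

/-- The coefficients `c(n,k,m,p)`. -/
def c (n : ℕ) (k : ℤ) (m p : ℕ) : ℤ :=
  if 0 ≤ k ∧ k ≤ (n : ℤ) ∧ (n : ℤ) % 2 = k % 2 ∧ 2 * (m : ℤ) ≤ (n : ℤ) + k then
    (-1) ^ ((((n : ℤ) - k) / 2).toNat) *
      f ((((n : ℤ) + k - 2 * m) / 2).toNat) (((n : ℤ) - k) / 2) m p
  else 0

/-- The polynomial `P_{n,m,p}(x) = ∑_{k=0}^n c(n,k,m,p) x^k`, as a real polynomial. -/
def P (n m p : ℕ) : Polynomial ℝ :=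
  ∑ k ∈ Finset.range (n + 1), Polynomial.C ((c n (k : ℤ) m p : ℝ)) * Polynomial.X ^ k

/-!
`f N K m 2` is the coefficient of `t ^ K` in `(1 + t) ^ m * (2 + t) ^ N`, hence
`f (N + 1) K m 2 = 2 * f N K m 2 + f N (K - 1) m 2`. In terms of the coefficients `c` this is
the Chebyshev recurrence `P (n + 2) = 2 X P (n + 1) - P n` (for `2 m ≤ n + 1`), and comparing
initial values gives `P n 2 2 = (X ^ 2 - 1) * U (n - 2)`. For `x = cos θ` this yields
`P n 2 2 (x) ^ 2 = sin θ ^ 2 * sin ((n - 1) θ) ^ 2 ≤ 1 - x ^ 2`.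
-/

theorem alternating_sum_range_succ_choose_succ_mul {R : Type*} [CommRing R] (N : ℕ)
    (g : ℕ → R) :
    ∑ i ∈ range (N + 2), (-1) ^ i * ((N + 1).choose i : R) * g i =
      ∑ i ∈ range (N + 1), (-1) ^ i * (N.choose i : R) * (g i - g (i + 1)) := by
  have hshift := sum_range_succ' (fun i ↦ (-1) ^ i * (N.choose i : R) * g i) (N + 1)
  rw [sum_range_succ, Nat.choose_succ_self] at hshift
  rw [sum_range_succ']
  simp only [Nat.choose_succ_succ, Nat.cast_add, pow_succ, mul_add, add_mul, sum_add_distrib,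
    mul_sub, sum_sub_distrib, mul_neg, mul_one, Nat.cast_zero, mul_zero, zero_mul, add_zero,
    neg_mul, sum_neg_distrib, pow_zero, Nat.choose_zero_right, Nat.cast_one, one_mul] at hshift ⊢
  linear_combination -hshift

theorem chooseZ_of_neg (a : ℕ) {b : ℤ} (hb : b < 0) : chooseZ a b = 0 :=
  if_neg hb.not_ge

theorem chooseZ_of_lt {a : ℕ} {b : ℤ} (hab : (a : ℤ) < b) : chooseZ a b = 0 := by
  rw [chooseZ, if_pos (by omega), Nat.choose_eq_zero_of_lt (by omega), Nat.cast_zero]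

theorem chooseZ_natCast (a c : ℕ) : chooseZ a c = a.choose c := by
  simp [chooseZ]

theorem chooseZ_succ (a : ℕ) (b : ℤ) : chooseZ (a + 1) b = chooseZ a b + chooseZ a (b - 1) := by
  rcases lt_trichotomy b 0 with hb | rfl | hb
  · simp [chooseZ_of_neg _ hb, chooseZ_of_neg _ (show b - 1 < 0 by omega)]
  · simp [chooseZ]
  · obtain ⟨b, rfl⟩ : ∃ b' : ℕ, b = b' + 1 := ⟨b.toNat - 1, by omega⟩
    rw [add_sub_cancel_right, ← Nat.cast_add_one, chooseZ_natCast, chooseZ_natCast,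
      chooseZ_natCast, Nat.choose_succ_succ', Nat.cast_add, add_comm]

theorem chooseZ_add_two_sub (a : ℕ) (b : ℤ) :
    chooseZ (a + 2) b - chooseZ a b = 2 * chooseZ a (b - 1) + chooseZ a (b - 2) := by
  rw [chooseZ_succ, chooseZ_succ, chooseZ_succ, show b - 1 - 1 = b - 2 by ring]
  ring

theorem f_zero (K : ℤ) (m p : ℕ) : f 0 K m p = chooseZ m K := by
  simp [f]

theorem f_succ (N : ℕ) (K : ℤ) (m : ℕ) :
    f (N + 1) K m 2 = 2 * f N K m 2 + f N (K - 1) m 2 := by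
  rw [f, alternating_sum_range_succ_choose_succ_mul, f, f, mul_sum, ← sum_add_distrib]
  refine sum_congr rfl fun i hi ↦ ?_
  have hi : i ≤ N := Nat.lt_succ_iff.mp (mem_range.mp hi)
  rw [show (N + 1) * 2 + m - i * 2 = N * 2 + m - i * 2 + 2 by omega,
    show (N + 1) * 2 + m - (i + 1) * 2 = N * 2 + m - i * 2 by omega, chooseZ_add_two_sub]
  push_cast
  ring_nf

theorem f_eq_zero_of_neg (N : ℕ) {K : ℤ} (hK : K < 0) (m : ℕ) : f N K m 2 = 0 := by
  induction N generalizing K with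
  | zero => rw [f_zero, chooseZ_of_neg _ hK]
  | succ N ih => rw [f_succ, ih hK, ih (by omega), mul_zero, add_zero]

theorem f_eq_zero_of_lt {N : ℕ} {K : ℤ} {m : ℕ} (hK : (N : ℤ) + m < K) : f N K m 2 = 0 := by
  induction N generalizing K with
  | zero => rw [f_zero, chooseZ_of_lt (by omega)]
  | succ N ih => rw [f_succ, ih (by omega), ih (by omega), mul_zero, add_zero]

theorem c_eq_zero_of_emod_ne {n : ℕ} {k : ℤ} (h : (n : ℤ) % 2 ≠ k % 2) (m p : ℕ) :
    c n k m p = 0 :=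
  if_neg fun hc ↦ h hc.2.2.1

theorem c_eq_zero_of_lt {n : ℕ} {k : ℤ} (h : (n : ℤ) < k) (m p : ℕ) : c n k m p = 0 :=
  if_neg fun hc ↦ h.not_ge hc.2.1

theorem c_add_two_mul {k b m : ℕ} (h : m ≤ k + b) (p : ℕ) :
    c (k + 2 * b) k m p = (-1) ^ b * f (k + b - m) b m p := by
  rw [c, if_pos (by omega)]
  have hsum : ((k + 2 * b : ℕ) : ℤ) + k - 2 * m = 2 * ((k + b - m : ℕ) : ℤ) := by omega
  have hdiff : ((k + 2 * b : ℕ) : ℤ) - k = 2 * b := by omega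
  rw [hsum, hdiff, Int.mul_ediv_cancel_left _ two_ne_zero, Int.mul_ediv_cancel_left _ two_ne_zero,
    Int.toNat_natCast, Int.toNat_natCast]

theorem c_add_two_zero {n m : ℕ} (h : 2 * m ≤ n + 1) : c (n + 2) 0 m 2 = -c n 0 m 2 := by
  rcases Nat.even_or_odd n with ⟨b, rfl⟩ | hodd
  · have hsucc := c_add_two_mul (k := 0) (b := b + 1) (m := m) (by omega) 2
    have hself := c_add_two_mul (k := 0) (b := b) (m := m) (by omega) 2
    simp only [zero_add, Nat.cast_zero] at hsucc hself
    rw [show b + b + 2 = 2 * (b + 1) by ring, show b + b = 2 * b by ring, hsucc, hself,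
      show b + 1 - m = (b - m) + 1 by omega, f_succ, f_eq_zero_of_lt (by omega)]
    push_cast [add_sub_cancel_right]
    ring
  · obtain ⟨b, rfl⟩ := hodd
    rw [c_eq_zero_of_emod_ne (by omega), c_eq_zero_of_emod_ne (by omega), neg_zero]

theorem c_add_two_succ {n m : ℕ} (h : 2 * m ≤ n + 1) (k : ℕ) :
    c (n + 2) (k + 1 : ℕ) m 2 = 2 * c (n + 1) k m 2 - c n (k + 1 : ℕ) m 2 := by
  by_cases hpar : (n + 1) % 2 = k % 2
  · by_cases hk : k ≤ n + 1
    · obtain ⟨b, hb⟩ : ∃ b, n + 1 = k + 2 * b := ⟨(n + 1 - k) / 2, by omega⟩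
      rw [show n + 2 = (k + 1) + 2 * b by omega, hb, c_add_two_mul (by omega),
        c_add_two_mul (by omega), show k + 1 + b - m = (k + b - m) + 1 by omega, f_succ]
      rcases b with _ | b
      · rw [c_eq_zero_of_lt (n := n) (k := (k + 1 : ℕ)) (by omega),
          f_eq_zero_of_neg _ (show ((0 : ℕ) : ℤ) - 1 < 0 by norm_num)]
        ring
      · rw [show n = (k + 1) + 2 * b by omega, c_add_two_mul (by omega),
          show k + 1 + b - m = k + (b + 1) - m by omega]
        push_cast [add_sub_cancel_right]
        ring
    · rw [c_eq_zero_of_lt (by omega), c_eq_zero_of_lt (by omega), c_eq_zero_of_lt (by omega)]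
      simp
  · rw [c_eq_zero_of_emod_ne (by omega), c_eq_zero_of_emod_ne (by omega),
      c_eq_zero_of_emod_ne (by omega)]
    simp

theorem coeff_P (n m p j : ℕ) : (P n m p).coeff j = c n j m p := by
  rw [P, finsetSum_coeff]
  simp only [coeff_C_mul, coeff_X_pow, mul_ite, mul_one, mul_zero, sum_ite_eq, mem_range]
  split_ifs with hj
  · rfl
  · rw [c_eq_zero_of_lt (by omega), Int.cast_zero]

theorem P_add_two {n m : ℕ} (h : 2 * m ≤ n + 1) :
    P (n + 2) m 2 = 2 * X * P (n + 1) m 2 - P n m 2 := by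
  ext (_ | j)
  · simp [coeff_P, c_add_two_zero h]
  · rw [coeff_sub, mul_assoc, ← C_ofNat, coeff_C_mul, coeff_X_mul, coeff_P, coeff_P, coeff_P,
      c_add_two_succ h]
    push_cast
    ring

open Polynomial.Chebyshev

theorem P_three : P 3 2 2 = (X ^ 2 - 1) * U ℝ 1 := by
  obtain ⟨h0, h1, h2, h3⟩ :
      c 3 0 2 2 = 0 ∧ c 3 1 2 2 = -2 ∧ c 3 2 2 2 = 0 ∧ c 3 3 2 2 = 2 := by decide
  simp [P, sum_range_succ, h0, h1, h2, h3, U_one]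
  ring

theorem P_four : P 4 2 2 = (X ^ 2 - 1) * U ℝ 2 := by
  obtain ⟨h0, h1, h2, h3, h4⟩ : c 4 0 2 2 = 1 ∧ c 4 1 2 2 = 0 ∧ c 4 2 2 2 = -5 ∧
      c 4 3 2 2 = 0 ∧ c 4 4 2 2 = 4 := by decide
  simp [P, sum_range_succ, h0, h1, h2, h3, h4, U_two]
  ring

theorem P_add_three (n : ℕ) : P (n + 3) 2 2 = (X ^ 2 - 1) * U ℝ (n + 1) := by
  induction n using Nat.twoStepInduction with
  | zero => simpa using P_three
  | one => simpa [one_add_one_eq_two] using P_four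
  | more n ih₀ ih₁ =>
    rw [P_add_two (by omega), ih₁, ih₀,
      show ((n + 2 : ℕ) : ℤ) + 1 = n + 1 + 2 by push_cast; ring, U_add_two]
    push_cast
    ring

theorem one_sub_sq_mul_eval_U_sq_le_one (n : ℤ) {x : ℝ} (hx : x ∈ Set.Icc (-1 : ℝ) 1) :
    (1 - x ^ 2) * (U ℝ n).eval x ^ 2 ≤ 1 := by
  obtain ⟨θ, rfl⟩ : ∃ θ, cos θ = x := ⟨arccos x, cos_arccos hx.1 hx.2⟩
  calc (1 - cos θ ^ 2) * (U ℝ n).eval (cos θ) ^ 2 = ((U ℝ n).eval (cos θ) * sin θ) ^ 2 := by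
        rw [← sin_sq]; ring
    _ = sin ((n + 1) * θ) ^ 2 := by rw [U_real_cos]
    _ ≤ 1 := sin_sq_le_one _

/-- For n ≥ 3 and x ∈ [-1,1], `P_n(x)² + x² ≤ 1`. -/
theorem statement4 (n : ℕ) (hn : 3 ≤ n) (x : ℝ) (hx : x ∈ Set.Icc (-1 : ℝ) 1) :
    (P n 2 2).eval x ^ 2 + x ^ 2 ≤ 1 := by
  obtain ⟨n, rfl⟩ := Nat.exists_eq_add_of_le' hn
  have hU := one_sub_sq_mul_eval_U_sq_le_one (n + 1) hx
  have hx2 : 0 ≤ 1 - x ^ 2 := by nlinarith [hx.1, hx.2]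
  rw [P_add_three, eval_mul]
  simp only [eval_sub, eval_pow, eval_X, eval_one]
  linear_combination mul_le_mul_of_nonneg_left hU hx2
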